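/- Let c > 0. For every real t, the characteristic function of the Lévy distribution with location 0 and scale c satisfies ∫_{(0,∞)} exp(i t z)·√(c/(2π z³))·exp(−c/(2z)) dz = exp(−√(c·|t|)·(1 − i·sgn(t))), where sgn(t) is 1 for t > 0, 0 for t = 0, and −1 for t < 0. (This identifies the Lévy distribution as the stable distribution S(0, c, 1/2, 1).) -/

import Mathlib

/-!
The substitution `z = c / (2 u²)` turns the Laplace transform `∫ f_c(z) e^{-lz} dz` (`l ≥ 0`) into
`(2 / √π) ∫₀^∞ exp (-(u² + (lc/2) / u²)) du`, and the Cauchy–Schlömilch substitution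
`u ↦ u - b / u` evaluates this to `exp (-√(2cl))`. Hence the complex moment generating function of
the Lévy distribution agrees with `z ↦ exp (-√(2c) (-z)^{1/2})` on the negative reals. Both
functions are holomorphic on `Re z < 0` and continuous on `Re z ≤ 0`, so they agree at `z = it`,
where `(-it)^{1/2} = √(|t|/2) (1 - i sgn t)`.
-/

open MeasureTheory

/-- The Lévy density with location 0 and scale `c`. -/
noncomputable def levyDensity (c z : ℝ) : ℝ :=
  if 0 < z then Real.sqrt (c / (2 * Real.pi * z ^ 3)) * Real.exp (-c / (2 * z)) else 0

open ProbabilityTheory Set Real Filter Topology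

section CauchySchlomilch

variable {E : Type*} [NormedAddCommGroup E] [NormedSpace ℝ E] {b : ℝ}

theorem hasDerivAt_sub_div (b : ℝ) {u : ℝ} (hu : u ≠ 0) :
    HasDerivAt (fun u : ℝ => u - b / u) (1 + b / u ^ 2) u := by
  have h := (hasDerivAt_id' u).sub ((hasDerivAt_inv hu).const_mul b)
  simp only [← div_eq_mul_inv] at h
  exact h.congr_deriv (by ring)

theorem hasDerivAt_const_div (b : ℝ) {u : ℝ} (hu : u ≠ 0) :
    HasDerivAt (fun u : ℝ => b / u) (-(b / u ^ 2)) u := by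
  have h := (hasDerivAt_inv hu).const_mul b
  simp only [← div_eq_mul_inv] at h
  exact h.congr_deriv (by ring)

theorem strictMonoOn_sub_div (hb : 0 < b) : StrictMonoOn (fun u : ℝ => u - b / u) (Ioi 0) :=
  fun _ hx _ _ hxy => sub_lt_sub hxy (div_lt_div_of_pos_left hb hx hxy)

theorem strictAntiOn_div (hb : 0 < b) : StrictAntiOn (fun u : ℝ => b / u) (Ioi 0) :=
  fun _ hx _ _ hxy => div_lt_div_of_pos_left hb hx hxy

theorem image_sub_div_Ioi (hb : 0 < b) : (fun u : ℝ => u - b / u) '' Ioi 0 = univ := by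
  refine eq_univ_of_forall fun v => ?_
  -- the positive root of `u ^ 2 - v * u - b = 0`
  set s := √(v ^ 2 + 4 * b)
  have hs : s ^ 2 = v ^ 2 + 4 * b := sq_sqrt (by positivity)
  have hu : 0 < (v + s) / 2 := by
    nlinarith [sqrt_nonneg (v ^ 2 + 4 * b), abs_nonneg v, sq_abs v, neg_abs_le v]
  have hb' : b / ((v + s) / 2) = (s - v) / 2 := by
    rw [div_eq_iff hu.ne']
    linear_combination -hs / 4
  refine ⟨(v + s) / 2, hu, ?_⟩
  simp only [hb']
  ring

theorem image_div_Ioi (hb : 0 < b) : (fun u : ℝ => b / u) '' Ioi 0 = Ioi 0 := by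
  refine (Subset.antisymm ?_ fun x (hx : 0 < x) => ⟨b / x, div_pos hb hx, ?_⟩)
  · rintro _ ⟨u, hu, rfl⟩; exact div_pos hb hu
  · field_simp

theorem one_le_one_add_div_sq (hb : 0 ≤ b) (u : ℝ) : 1 ≤ 1 + b / u ^ 2 :=
  le_add_of_nonneg_right (by positivity)

theorem hasDerivWithinAt_sub_div_Ioi (b : ℝ) :
    ∀ u ∈ Ioi (0 : ℝ), HasDerivWithinAt (fun u => u - b / u) (1 + b / u ^ 2) (Ioi 0) u :=
  fun _ hu => (hasDerivAt_sub_div b (ne_of_gt hu)).hasDerivWithinAt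

theorem hasDerivWithinAt_div_Ioi (b : ℝ) :
    ∀ u ∈ Ioi (0 : ℝ), HasDerivWithinAt (fun u => b / u) (-(b / u ^ 2)) (Ioi 0) u :=
  fun _ hu => (hasDerivAt_const_div b (ne_of_gt hu)).hasDerivWithinAt

theorem integrableOn_Ioi_smul_comp_sub_div_iff (hb : 0 < b) (g : ℝ → E) :
    IntegrableOn (fun u => (1 + b / u ^ 2) • g (u - b / u)) (Ioi 0) ↔ Integrable g := by
  rw [← integrableOn_univ, ← image_sub_div_Ioi hb, integrableOn_image_iff_integrableOn_abs_deriv_smul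
    measurableSet_Ioi (hasDerivWithinAt_sub_div_Ioi b) (strictMonoOn_sub_div hb).injOn]
  simp only [abs_of_pos (zero_lt_one.trans_le (one_le_one_add_div_sq hb.le _))]

theorem integral_Ioi_smul_comp_sub_div (hb : 0 < b) (g : ℝ → E) :
    ∫ u in Ioi 0, (1 + b / u ^ 2) • g (u - b / u) = ∫ x, g x := by
  conv_rhs => rw [← setIntegral_univ, ← image_sub_div_Ioi hb]
  rw [integral_image_eq_integral_abs_deriv_smul measurableSet_Ioi (hasDerivWithinAt_sub_div_Ioi b)
    (strictMonoOn_sub_div hb).injOn]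
  simp only [abs_of_pos (zero_lt_one.trans_le (one_le_one_add_div_sq hb.le _))]

theorem integrableOn_Ioi_smul_comp_div_iff (hb : 0 < b) (g : ℝ → E) :
    IntegrableOn (fun u => (b / u ^ 2) • g (b / u)) (Ioi 0) ↔ IntegrableOn g (Ioi 0) := by
  conv_rhs => rw [← image_div_Ioi hb]
  rw [integrableOn_image_iff_integrableOn_abs_deriv_smul measurableSet_Ioi
    (hasDerivWithinAt_div_Ioi b) (strictAntiOn_div hb).injOn]
  simp only [abs_neg, abs_of_nonneg (div_nonneg hb.le (sq_nonneg _))]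

theorem integral_Ioi_smul_comp_div (hb : 0 < b) (g : ℝ → E) :
    ∫ u in Ioi 0, (b / u ^ 2) • g (b / u) = ∫ u in Ioi 0, g u := by
  conv_rhs => rw [← image_div_Ioi hb]
  rw [integral_image_eq_integral_abs_deriv_smul measurableSet_Ioi
    (hasDerivWithinAt_div_Ioi b) (strictAntiOn_div hb).injOn]
  simp only [abs_neg, abs_of_nonneg (div_nonneg hb.le (sq_nonneg _))]

theorem integrableOn_Ioi_comp_sub_div {f : ℝ → E} (hf : Integrable f) (hb : 0 < b) :
    IntegrableOn (fun u => f (u - b / u)) (Ioi 0) := by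
  have hpos : ∀ u : ℝ, 0 < 1 + b / u ^ 2 := fun u =>
    zero_lt_one.trans_le (one_le_one_add_div_sq hb.le u)
  have h := (integrableOn_Ioi_smul_comp_sub_div_iff hb f).2 hf
  refine IntegrableOn.congr_fun (h.bdd_smul 1 (φ := fun u => (1 + b / u ^ 2)⁻¹)
    (by fun_prop : Measurable _).aestronglyMeasurable (ae_of_all _ fun u => ?_))
    (fun u _ => ?_) measurableSet_Ioi
  · rw [norm_inv, Real.norm_of_nonneg (hpos u).le]
    exact inv_le_one_of_one_le₀ (one_le_one_add_div_sq hb.le u)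
  · simp only [Pi.smul_apply', smul_smul, inv_mul_cancel₀ (hpos u).ne', one_smul]

/-- The Cauchy–Schlömilch transformation. -/
theorem integral_Ioi_comp_sub_div_of_even {f : ℝ → E} (hf : Integrable f)
    (heven : ∀ x, f (-x) = f x) (hb : 0 < b) :
    ∫ u in Ioi 0, f (u - b / u) = (2 : ℝ)⁻¹ • ∫ x, f x := by
  -- `u ↦ b / u` preserves `Ioi 0` and exchanges `u - b / u` with its negative
  have hinv : (fun u => (b / u ^ 2) • f (b / u - b / (b / u))) =
      fun u => (b / u ^ 2) • f (u - b / u) := by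
    ext u
    simp only [div_div_cancel₀ hb.ne', ← heven (u - b / u), neg_sub]
  have hF := integrableOn_Ioi_comp_sub_div hf hb
  have hF' : IntegrableOn (fun u => (b / u ^ 2) • f (u - b / u)) (Ioi 0) := by
    rw [← hinv, integrableOn_Ioi_smul_comp_div_iff hb (fun u => f (u - b / u))]
    exact hF
  have hsum : ∫ x, f x = (2 : ℝ) • ∫ u in Ioi 0, f (u - b / u) := calc
    ∫ x, f x = ∫ u in Ioi 0, (1 + b / u ^ 2) • f (u - b / u) :=
      (integral_Ioi_smul_comp_sub_div hb f).symm
    _ = (∫ u in Ioi 0, f (u - b / u)) + ∫ u in Ioi 0, (b / u ^ 2) • f (u - b / u) := by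
      simp only [add_smul, one_smul, integral_add hF hF']
    _ = (2 : ℝ) • ∫ u in Ioi 0, f (u - b / u) := by
      rw [← hinv, integral_Ioi_smul_comp_div hb (fun u => f (u - b / u)), two_smul]
  rw [hsum, smul_smul, inv_mul_cancel₀ two_ne_zero, one_smul]

theorem integral_Ioi_exp_neg_sq_add_sq_div_sq (hb : 0 ≤ b) :
    ∫ u in Ioi 0, exp (-(u ^ 2 + b ^ 2 / u ^ 2)) = √π / 2 * exp (-(2 * b)) := by
  rcases hb.eq_or_lt with rfl | hb
  · simpa using integral_gaussian_Ioi 1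
  have hsq : ∀ u ∈ Ioi (0 : ℝ),
      exp (-(u ^ 2 + b ^ 2 / u ^ 2)) = exp (-(2 * b)) * exp (-(u - b / u) ^ 2) := by
    intro u hu
    have hu : u ≠ 0 := ne_of_gt hu
    rw [← exp_add]
    congr 1
    field_simp
    ring
  have hgauss : ∫ x, exp (-x ^ 2) = √π := by simpa using integral_gaussian 1
  rw [setIntegral_congr_fun measurableSet_Ioi hsq, integral_const_mul,
    integral_Ioi_comp_sub_div_of_even (f := fun x => exp (-x ^ 2))
      (by simpa using integrable_exp_neg_mul_sq one_pos) (fun x => by simp) hb, hgauss,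
    smul_eq_mul]
  ring

end CauchySchlomilch

section ComplexMGF

variable {Ω : Type*} [MeasurableSpace Ω] {μ : Measure Ω} [IsFiniteMeasure μ] {X : Ω → ℝ}

theorem Iic_subset_integrableExpSet_of_nonneg (hX : AEMeasurable X μ) (hX0 : ∀ᵐ ω ∂μ, 0 ≤ X ω) :
    Iic 0 ⊆ integrableExpSet X μ := fun t (ht : t ≤ 0) =>
  Integrable.of_bound (by fun_prop) 1 <| hX0.mono fun ω hω => by
    rw [norm_of_nonneg (exp_pos _).le, exp_le_one_iff]
    exact mul_nonpos_of_nonpos_of_nonneg ht hω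

theorem analyticOnNhd_complexMGF_of_nonneg (hX : AEMeasurable X μ) (hX0 : ∀ᵐ ω ∂μ, 0 ≤ X ω) :
    AnalyticOnNhd ℂ (complexMGF X μ) {z | z.re < 0} := by
  refine analyticOnNhd_complexMGF.mono fun z (hz : z.re < 0) => ?_
  exact interior_mono (Iic_subset_integrableExpSet_of_nonneg hX hX0) (by simpa using hz)

theorem continuousOn_complexMGF_of_nonneg (hX : AEMeasurable X μ) (hX0 : ∀ᵐ ω ∂μ, 0 ≤ X ω) :
    ContinuousOn (complexMGF X μ) {z | z.re ≤ 0} := by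
  refine continuousOn_of_dominated (bound := fun _ => 1) (fun z _ => by fun_prop)
    (fun z (hz : z.re ≤ 0) => hX0.mono fun ω hω => ?_) (integrable_const 1)
    (ae_of_all _ fun ω => by fun_prop)
  rw [Complex.norm_exp, exp_le_one_iff]
  simpa using mul_nonpos_of_nonpos_of_nonneg hz hω

theorem eqOn_complexMGF_of_nonneg (hX : AEMeasurable X μ) (hX0 : ∀ᵐ ω ∂μ, 0 ≤ X ω) {G : ℂ → ℂ}
    (hG : AnalyticOnNhd ℂ G {z | z.re < 0}) (hGc : ContinuousOn G {z | z.re ≤ 0})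
    (hreal : ∀ t : ℝ, t < 0 → complexMGF X μ t = G t) :
    EqOn (complexMGF X μ) G {z | z.re ≤ 0} := by
  have hopen : EqOn (complexMGF X μ) G {z | z.re < 0} := by
    refine (analyticOnNhd_complexMGF_of_nonneg hX hX0).eqOn_of_preconnected_of_frequently_eq hG
      (convex_halfSpace_re_lt 0).isPreconnected (z₀ := -1) (by simp) ?_
    have hnear : ∀ᶠ t : ℝ in 𝓝[≠] (-1), complexMGF X μ t = G t :=
      eventually_nhdsWithin_of_eventually_nhds <|
        (eventually_lt_nhds (by norm_num : (-1 : ℝ) < 0)).mono hreal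
    have hofReal : Tendsto ((↑) : ℝ → ℂ) (𝓝[≠] (-1)) (𝓝[≠] (-1)) :=
      tendsto_nhdsWithin_iff.2 ⟨(Complex.continuous_ofReal.tendsto' _ _ (by simp)).mono_left
        nhdsWithin_le_nhds, eventually_nhdsWithin_of_forall fun t (ht : t ≠ -1) =>
          (by exact_mod_cast ht : (t : ℂ) ≠ -1)⟩
    exact hofReal.frequently hnear.frequently
  exact hopen.of_subset_closure (continuousOn_complexMGF_of_nonneg hX hX0) hGc
    (fun z (hz : z.re < 0) => le_of_lt hz) (by simp)

end ComplexMGF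

theorem Complex.neg_mul_I_cpow_inv_two (t : ℝ) :
    (-(t * Complex.I)) ^ (2⁻¹ : ℂ) = √(|t| / 2) * (1 - Complex.I * (sign t : ℝ)) := by
  have hnorm : ‖-(t * Complex.I)‖ = |t| := by simp
  apply Complex.ext
  · simp [Complex.cpow_inv_two_re, hnorm]
  · rcases lt_trichotomy t 0 with ht | rfl | ht
    · rw [Complex.cpow_inv_two_im_eq_sqrt (by simpa using ht.le)]
      simp [hnorm, sign_of_neg ht]
    · simp
    · rw [Complex.cpow_inv_two_im_eq_neg_sqrt (by simpa using ht)]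
      simp [hnorm, sign_of_pos ht]

section Levy

variable {E : Type*} [NormedAddCommGroup E] [NormedSpace ℝ E] {c : ℝ}

theorem levyDensity_nonneg (c z : ℝ) : 0 ≤ levyDensity c z := by
  unfold levyDensity
  split_ifs <;> positivity

theorem measurable_levyDensity (c : ℝ) : Measurable (levyDensity c) := by
  unfold levyDensity
  exact Measurable.ite measurableSet_Ioi (by fun_prop) measurable_const

theorem div_cube_mul_levyDensity_div_two_mul_sq (hc : 0 < c) {u : ℝ} (hu : 0 < u) :
    c / u ^ 3 * levyDensity c (c / (2 * u ^ 2)) = 2 / √π * exp (-u ^ 2) := by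
  have hπ : 0 < √π := sqrt_pos.2 pi_pos
  have hsq : c / (2 * π * (c / (2 * u ^ 2)) ^ 3) = (2 * u ^ 3 / (√π * c)) ^ 2 := by
    field_simp
    rw [sq_sqrt pi_pos.le]
  have hexp : -c / (2 * (c / (2 * u ^ 2))) = -u ^ 2 := by
    field_simp
  rw [levyDensity, if_pos (by positivity), hsq, sqrt_sq (by positivity), hexp]
  field_simp

theorem hasDerivWithinAt_div_two_mul_sq_Ioi (c : ℝ) :
    ∀ u ∈ Ioi (0 : ℝ), HasDerivWithinAt (fun u => c / (2 * u ^ 2)) (-(c / u ^ 3)) (Ioi 0) u := by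
  intro u hu
  have hu : u ≠ 0 := ne_of_gt hu
  have h := (hasDerivAt_const u c).div ((hasDerivAt_pow 2 u).const_mul 2) (by positivity)
  exact (h.congr_deriv (by field_simp; ring)).hasDerivWithinAt

theorem strictAntiOn_div_two_mul_sq (hc : 0 < c) :
    StrictAntiOn (fun u : ℝ => c / (2 * u ^ 2)) (Ioi 0) := fun x hx _ _ hxy =>
  div_lt_div_of_pos_left hc (by have : (0 : ℝ) < x := hx; positivity)
    (by gcongr; exact le_of_lt hx)

theorem image_div_two_mul_sq_Ioi (hc : 0 < c) :
    (fun u : ℝ => c / (2 * u ^ 2)) '' Ioi 0 = Ioi 0 := by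
  refine Subset.antisymm ?_ fun z (hz : 0 < z) => ⟨√(c / (2 * z)), sqrt_pos.2 (by positivity), ?_⟩
  · rintro _ ⟨u, hu, rfl⟩
    have : (0 : ℝ) < u := hu
    exact div_pos hc (by positivity)
  · simp only
    rw [sq_sqrt (by positivity)]
    field_simp

theorem integral_Ioi_levyDensity_smul (hc : 0 < c) (g : ℝ → E) :
    ∫ z in Ioi 0, levyDensity c z • g z =
      ∫ u in Ioi 0, (2 / √π * exp (-u ^ 2)) • g (c / (2 * u ^ 2)) := by
  conv_lhs => rw [← image_div_two_mul_sq_Ioi hc]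
  rw [integral_image_eq_integral_abs_deriv_smul measurableSet_Ioi
    (hasDerivWithinAt_div_two_mul_sq_Ioi c) (strictAntiOn_div_two_mul_sq hc).injOn]
  refine setIntegral_congr_fun measurableSet_Ioi fun u (hu : 0 < u) => ?_
  rw [abs_neg, abs_of_pos (by positivity), smul_smul, div_cube_mul_levyDensity_div_two_mul_sq hc hu]

theorem integrableOn_Ioi_levyDensity_smul_iff (hc : 0 < c) (g : ℝ → E) :
    IntegrableOn (fun z => levyDensity c z • g z) (Ioi 0) ↔
      IntegrableOn (fun u => (2 / √π * exp (-u ^ 2)) • g (c / (2 * u ^ 2))) (Ioi 0) := by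
  conv_lhs => rw [← image_div_two_mul_sq_Ioi hc]
  rw [integrableOn_image_iff_integrableOn_abs_deriv_smul
    measurableSet_Ioi (hasDerivWithinAt_div_two_mul_sq_Ioi c) (strictAntiOn_div_two_mul_sq hc).injOn]
  refine integrableOn_congr_fun (fun u (hu : 0 < u) => ?_) measurableSet_Ioi
  rw [abs_neg, abs_of_pos (by positivity), smul_smul, div_cube_mul_levyDensity_div_two_mul_sq hc hu]

theorem integrableOn_levyDensity (hc : 0 < c) : IntegrableOn (levyDensity c) (Ioi 0) := by
  have hgauss : Integrable fun u : ℝ => 2 / √π * exp (-u ^ 2) := by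
    simpa using (integrable_exp_neg_mul_sq one_pos).const_mul (2 / √π)
  simpa using (integrableOn_Ioi_levyDensity_smul_iff hc (fun _ => (1 : ℝ))).2 (by
    simpa using hgauss.integrableOn)

theorem integral_Ioi_levyDensity_mul_exp_neg {l : ℝ} (hc : 0 < c) (hl : 0 ≤ l) :
    ∫ z in Ioi 0, levyDensity c z * exp (-(l * z)) = exp (-√(2 * c * l)) := by
  have hb : ∀ u : ℝ, exp (-u ^ 2) * exp (-(l * (c / (2 * u ^ 2)))) =
      exp (-(u ^ 2 + √(l * c / 2) ^ 2 / u ^ 2)) := by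
    intro u
    rw [← exp_add, sq_sqrt (by positivity)]
    congr 1
    ring
  have h2 : 2 * √(l * c / 2) = √(2 * c * l) := by
    rw [show 2 * c * l = 2 ^ 2 * (l * c / 2) by ring, sqrt_mul (by positivity), sqrt_sq two_pos.le]
  simp only [← smul_eq_mul, integral_Ioi_levyDensity_smul hc]
  simp only [smul_eq_mul, mul_assoc, hb, integral_const_mul,
    integral_Ioi_exp_neg_sq_add_sq_div_sq (sqrt_nonneg _), h2]
  field_simp

noncomputable def levyMeasure (c : ℝ) : Measure ℝ :=
  (volume.restrict (Ioi 0)).withDensity fun z => ENNReal.ofReal (levyDensity c z)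

theorem integral_levyMeasure (c : ℝ) (g : ℝ → E) :
    ∫ z, g z ∂levyMeasure c = ∫ z in Ioi 0, levyDensity c z • g z := by
  rw [levyMeasure, integral_withDensity_eq_integral_toReal_smul
    (measurable_levyDensity c).ennreal_ofReal (ae_of_all _ fun _ => ENNReal.ofReal_lt_top)]
  simp only [ENNReal.toReal_ofReal (levyDensity_nonneg c _)]

theorem ae_levyMeasure_nonneg (c : ℝ) : ∀ᵐ z ∂levyMeasure c, 0 ≤ z :=
  (withDensity_absolutelyContinuous _ _).ae_le <|
    (ae_restrict_mem measurableSet_Ioi).mono fun _ hz => le_of_lt hz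

theorem integral_Ioi_levyDensity (hc : 0 < c) : ∫ z in Ioi 0, levyDensity c z = 1 := by
  simpa using integral_Ioi_levyDensity_mul_exp_neg hc le_rfl

theorem isProbabilityMeasure_levyMeasure (hc : 0 < c) : IsProbabilityMeasure (levyMeasure c) := by
  constructor
  rw [levyMeasure, withDensity_apply _ MeasurableSet.univ, Measure.restrict_univ,
    ← ofReal_integral_eq_lintegral_ofReal (integrableOn_levyDensity hc)
      (ae_of_all _ (levyDensity_nonneg c)), integral_Ioi_levyDensity hc, ENNReal.ofReal_one]

theorem mgf_levyMeasure_neg {l : ℝ} (hc : 0 < c) (hl : 0 ≤ l) :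
    mgf id (levyMeasure c) (-l) = exp (-√(2 * c * l)) := by
  rw [mgf, integral_levyMeasure, ← integral_Ioi_levyDensity_mul_exp_neg hc hl]
  simp only [id, smul_eq_mul, neg_mul]

theorem complexMGF_levyMeasure (hc : 0 < c) {z : ℂ} (hz : z.re ≤ 0) :
    complexMGF id (levyMeasure c) z = Complex.exp (-√(2 * c) * (-z) ^ (2⁻¹ : ℂ)) := by
  have := isProbabilityMeasure_levyMeasure hc
  refine eqOn_complexMGF_of_nonneg (G := fun w => Complex.exp (-√(2 * c) * (-w) ^ (2⁻¹ : ℂ)))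
    aemeasurable_id (ae_levyMeasure_nonneg c) ?_ ?_ ?_ hz
  · refine DifferentiableOn.analyticOnNhd (fun w (hw : w.re < 0) => ?_)
      (isOpen_lt Complex.continuous_re continuous_const)
    have hslit : -w ∈ Complex.slitPlane := Or.inl (by simpa using hw)
    exact ((differentiableAt_neg_iff.2 differentiableAt_id).cpow_const hslit
      |>.const_mul _ |>.cexp).differentiableWithinAt
  · refine fun w (hw : w.re ≤ 0) => ContinuousAt.continuousWithinAt ?_
    have hcpow := Complex.continuousAt_cpow_const_of_re_pos (z := -w) (w := 2⁻¹)
      (Or.inl (by simpa using hw)) (by norm_num)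
    exact ((hcpow.comp continuousAt_neg).const_mul _).cexp
  · intro t ht
    have hsqrt : (-(t : ℂ)) ^ (2⁻¹ : ℂ) = (√(-t) : ℂ) := by
      rw [← Complex.ofReal_neg, sqrt_eq_rpow, Complex.ofReal_cpow (by linarith)]
      norm_num
    rw [show (t : ℂ) = ((-(-t) : ℝ) : ℂ) by simp, complexMGF_ofReal,
      mgf_levyMeasure_neg hc (by linarith), neg_neg, hsqrt, sqrt_mul (by positivity)]
    push_cast
    ring_nf

end Levy

/-- The characteristic function of the Lévy distribution with location 0 and scale `c`:
`∫_{(0,∞)} exp(itz) f_c(z) dz = exp(−√(c|t|)·(1 − i·sgn t))`. -/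
theorem levy_characteristic_function (c : ℝ) (hc : 0 < c) (t : ℝ) :
    ∫ z in Set.Ioi (0 : ℝ), Complex.exp (Complex.I * t * z) * (levyDensity c z : ℂ)
      = Complex.exp (-(Real.sqrt (c * |t|) : ℂ) * (1 - Complex.I * (Real.sign t : ℝ))) := by
  have hchar : ∫ z in Ioi (0 : ℝ), Complex.exp (Complex.I * t * z) * (levyDensity c z : ℂ) =
      complexMGF id (levyMeasure c) (t * Complex.I) := by
    rw [complexMGF, integral_levyMeasure]
    refine setIntegral_congr_fun measurableSet_Ioi fun z _ => ?_
    simp only [id, Complex.real_smul]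
    ring_nf
  have hscale : √(2 * c) * √(|t| / 2) = √(c * |t|) := by
    rw [← sqrt_mul (by positivity)]
    ring_nf
  rw [hchar, complexMGF_levyMeasure hc (by simp), Complex.neg_mul_I_cpow_inv_two, ← hscale]
  push_cast
  ring_nf
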